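/- arXiv:2602.11926 — 3 statements merged into one kernel-verified Lean document; each statement's English description precedes it below -/
import Mathlib

section
/- Let h : ℝ → ℝ be twice continuously differentiable and let s₀ ∈ ℝ. Then the function Δ ↦ ∫_{−Δ/2}^{Δ/2} t² h(s₀ + t) dt − h(s₀) Δ³ / 12 is O(Δ⁵) as Δ → 0. -/
open MeasureTheory intervalIntegral Filter Asymptotics

/-- Local distortion expansion: for `h` twice continuously differentiable,
`∫_{-Δ/2}^{Δ/2} t² h(s₀+t) dt = h(s₀) Δ³/12 + O(Δ⁵)` as `Δ → 0`. -/
theorem stmt3 (h : ℝ → ℝ) (hh : ContDiff ℝ 2 h) (s₀ : ℝ) :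
    (fun Δ : ℝ => (∫ t in (-Δ / 2)..(Δ / 2), t ^ 2 * h (s₀ + t)) - h s₀ * Δ ^ 3 / 12)
      =O[nhds (0 : ℝ)] fun Δ : ℝ => Δ ^ 5 := by
  have hd1 : Differentiable ℝ h := hh.differentiable (by norm_num)
  have hh1 : ContDiff ℝ 1 (deriv h) := by
    exact (contDiff_succ_iff_deriv.mp (show ContDiff ℝ (1 + 1) h from hh)).2.2
  have hd2 : Differentiable ℝ (deriv h) := hh1.differentiable one_ne_zero
  have hc2 : Continuous (deriv (deriv h)) := by
    exact (contDiff_succ_iff_deriv.mp (show ContDiff ℝ (0 + 1) (deriv h) from hh1)).2.2.continuous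
  obtain ⟨M, hM⟩ := (isCompact_Icc (a := s₀ - 1) (b := s₀ + 1)).exists_bound_of_continuousOn
    hc2.continuousOn
  have hM0 : 0 ≤ M := le_trans (norm_nonneg _) (hM s₀ (by constructor <;> linarith))
  -- Taylor bound
  have taylor : ∀ t : ℝ, |t| ≤ 1 → |h (s₀ + t) - h s₀ - t * deriv h s₀| ≤ M * t ^ 2 := by
    intro t ht
    have habs := abs_le.mp ht
    have hsub : Set.uIcc s₀ (s₀ + t) ⊆ Set.Icc (s₀ - 1) (s₀ + 1) := by
      apply Set.uIcc_subset_Icc <;> constructor <;> linarith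
    -- first: deriv h is (M*|t|)-Lipschitz-bounded increments... we bound deriv h x - deriv h s₀
    have hbound1 : ∀ x ∈ Set.uIcc s₀ (s₀ + t), ‖deriv h x - deriv h s₀‖ ≤ M * |t| := by
      intro x hx
      have := (convex_uIcc s₀ (s₀ + t)).norm_image_sub_le_of_norm_deriv_le
        (fun y _ => hd2 y) (fun y hy => hM y (hsub hy)) (Set.left_mem_uIcc) hx
      have hxs : ‖x - s₀‖ ≤ |t| := by
        rcases Set.mem_uIcc.mp hx with ⟨h1, h2⟩ | ⟨h1, h2⟩ <;>
          · rw [Real.norm_eq_abs, abs_le]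
            constructor <;> [nlinarith [le_abs_self t, neg_abs_le t];
              nlinarith [le_abs_self t, neg_abs_le t]]
      calc ‖deriv h x - deriv h s₀‖ ≤ M * ‖x - s₀‖ := this
        _ ≤ M * |t| := by nlinarith [norm_nonneg (x - s₀)]
    -- second: apply to f x = h x - x * deriv h s₀
    have hdf : ∀ x : ℝ, DifferentiableAt ℝ (fun y => h y - y * deriv h s₀) x := by
      intro x; exact (hd1 x).sub (differentiableAt_id.mul_const _)
    have hderiv : ∀ x : ℝ, deriv (fun y => h y - y * deriv h s₀) x = deriv h x - deriv h s₀ := by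
      intro x
      have := ((hd1 x).hasDerivAt.sub ((hasDerivAt_id x).mul_const (deriv h s₀))).deriv
      simpa [Pi.sub_def] using this
    have key := (convex_uIcc s₀ (s₀ + t)).norm_image_sub_le_of_norm_deriv_le
      (f := fun y => h y - y * deriv h s₀) (fun y _ => hdf y)
      (fun y hy => by rw [hderiv]; exact hbound1 y hy) (Set.left_mem_uIcc) (Set.right_mem_uIcc)
    simp only [Real.norm_eq_abs] at key
    have h2 : |s₀ + t - s₀| = |t| := by ring_nf
    calc |h (s₀ + t) - h s₀ - t * deriv h s₀|
        = |(h (s₀ + t) - (s₀ + t) * deriv h s₀) - (h s₀ - s₀ * deriv h s₀)| := by ring_nf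
      _ ≤ M * |t| * |s₀ + t - s₀| := key
      _ = M * t ^ 2 := by rw [h2, mul_assoc, ← sq, sq_abs]
  rw [isBigO_iff]
  refine ⟨M, ?_⟩
  have hball : ∀ᶠ Δ : ℝ in nhds 0, |Δ| < 2 := by
    have := Metric.ball_mem_nhds (0 : ℝ) (by norm_num : (0:ℝ) < 2)
    filter_upwards [this] with Δ hΔ
    simpa [Real.dist_eq] using hΔ
  filter_upwards [hball] with Δ hΔ
  have i1 : IntervalIntegrable (fun t => t ^ 2 * h (s₀ + t)) volume (-Δ / 2) (Δ / 2) := by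
    apply Continuous.intervalIntegrable
    exact (continuous_pow 2).mul (hd1.continuous.comp (continuous_const.add continuous_id))
  have i2 : IntervalIntegrable (fun t : ℝ => h s₀ * t ^ 2 + deriv h s₀ * t ^ 3) volume
      (-Δ / 2) (Δ / 2) := by
    apply Continuous.intervalIntegrable; continuity
  have hsplit : (∫ t in (-Δ / 2)..(Δ / 2), t ^ 2 * h (s₀ + t)) - h s₀ * Δ ^ 3 / 12
      = ∫ t in (-Δ / 2)..(Δ / 2), t ^ 2 * (h (s₀ + t) - h s₀ - t * deriv h s₀) := by
    have e1 : (fun t : ℝ => t ^ 2 * (h (s₀ + t) - h s₀ - t * deriv h s₀))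
        = fun t => t ^ 2 * h (s₀ + t) - (h s₀ * t ^ 2 + deriv h s₀ * t ^ 3) := by
      funext t; ring
    rw [e1, intervalIntegral.integral_sub i1 i2, intervalIntegral.integral_add
      ((Continuous.intervalIntegrable (by continuity) _ _))
      ((Continuous.intervalIntegrable (by continuity) _ _)),
      intervalIntegral.integral_const_mul, intervalIntegral.integral_const_mul,
      integral_pow, integral_pow]
    ring
  rw [hsplit]
  have hb : ∀ x ∈ Set.uIoc (-Δ / 2) (Δ / 2),
      ‖x ^ 2 * (h (s₀ + x) - h s₀ - x * deriv h s₀)‖ ≤ M * (|Δ| / 2) ^ 4 := by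
    intro x hx
    have hxabs : |x| ≤ |Δ| / 2 := by
      rcases Set.mem_uIoc.mp hx with ⟨h1, h2⟩ | ⟨h1, h2⟩ <;>
        · rw [abs_le]
          constructor <;> [nlinarith [le_abs_self Δ, neg_abs_le Δ];
            nlinarith [le_abs_self Δ, neg_abs_le Δ]]
    have hx1 : |x| ≤ 1 := by linarith
    have ht := taylor x hx1
    rw [Real.norm_eq_abs, abs_mul, abs_pow]
    calc |x| ^ 2 * |h (s₀ + x) - h s₀ - x * deriv h s₀| ≤ |x| ^ 2 * (M * x ^ 2) := by
          nlinarith [abs_nonneg x]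
      _ = M * |x| ^ 4 := by rw [← sq_abs x]; ring
      _ ≤ M * (|Δ| / 2) ^ 4 :=
          mul_le_mul_of_nonneg_left (pow_le_pow_left₀ (abs_nonneg x) hxabs 4) hM0
  have := intervalIntegral.norm_integral_le_of_norm_le_const hb
  rw [Real.norm_eq_abs] at this ⊢
  have hlen : |Δ / 2 - -Δ / 2| = |Δ| := by
    rw [show Δ / 2 - -Δ / 2 = Δ by ring]
  rw [hlen] at this
  calc |∫ t in (-Δ / 2)..(Δ / 2), t ^ 2 * (h (s₀ + t) - h s₀ - t * deriv h s₀)|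
      ≤ M * (|Δ| / 2) ^ 4 * |Δ| := this
    _ = M * (|Δ| ^ 5 / 16) := by ring
    _ ≤ M * |Δ| ^ 5 := by nlinarith [pow_nonneg (abs_nonneg Δ) 5]
    _ = M * ‖Δ ^ 5‖ := by rw [Real.norm_eq_abs, abs_pow]
end

section
/- Let L > 0 and let h : [0,L] → ℝ be continuous and strictly positive. Set Z = ∫_0^L h(u)^{1/3} du and λ*(s) = h(s)^{1/3}/Z. Then λ* is strictly positive with ∫_0^L λ*(s) ds = 1, it satisfies ∫_0^L h(s)/λ*(s)² ds = Z³, and for any measurable λ : [0,L] → ℝ with λ > 0 a.e., ∫_0^L λ = 1, and ∫_0^L h(s)/λ(s)² ds = Z³, one has λ = λ* almost everywhere. -/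
open MeasureTheory

lemma cubic_id (a x Z : ℝ) (hx : x ≠ 0) :
    a ^ 3 / x ^ 2 + 2 * Z ^ 3 * x - 3 * Z ^ 2 * a
      = (a - Z * x) ^ 2 * (a + 2 * Z * x) / x ^ 2 := by
  field_simp
  ring

/-- The point-density law: for a continuous strictly positive density `h` on `[0,L]`,
with `Z = ∫_0^L h^{1/3}` and `λ*(s) = h(s)^{1/3}/Z`, the density `λ*` is strictly
positive, integrates to `1`, achieves `∫_0^L h/λ*² = Z³`, and is the unique (a.e.)
positive normalized density achieving the value `Z³`. -/
theorem stmt6 (L : ℝ) (hL : 0 < L) (h : ℝ → ℝ)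
    (hc : ContinuousOn h (Set.Icc 0 L))
    (hpos : ∀ s ∈ Set.Icc (0 : ℝ) L, 0 < h s)
    (Z : ℝ) (hZ : Z = ∫ u in Set.Icc (0 : ℝ) L, h u ^ ((1 : ℝ) / 3))
    (lamStar : ℝ → ℝ) (hlamStar : ∀ s : ℝ, lamStar s = h s ^ ((1 : ℝ) / 3) / Z) :
    (∀ s ∈ Set.Icc (0 : ℝ) L, 0 < lamStar s) ∧
    (∫ s in Set.Icc (0 : ℝ) L, lamStar s) = 1 ∧
    (∫ s in Set.Icc (0 : ℝ) L, h s / lamStar s ^ 2) = Z ^ 3 ∧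
    (∀ lam : ℝ → ℝ, Measurable lam →
      (∀ᵐ s ∂(volume.restrict (Set.Icc (0 : ℝ) L)), 0 < lam s) →
      (∫ s in Set.Icc (0 : ℝ) L, lam s) = 1 →
      (∫ s in Set.Icc (0 : ℝ) L, h s / lam s ^ 2) = Z ^ 3 →
      (∀ᵐ s ∂(volume.restrict (Set.Icc (0 : ℝ) L)), lam s = lamStar s)) := by
  set a : ℝ → ℝ := fun s => h s ^ ((1 : ℝ) / 3) with ha
  have hapos : ∀ s ∈ Set.Icc (0 : ℝ) L, 0 < a s := fun s hs =>
    Real.rpow_pos_of_pos (hpos s hs) _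
  have hcont3 : ContinuousOn a (Set.Icc 0 L) :=
    hc.rpow_const (fun x hx => Or.inl (ne_of_gt (hpos x hx)))
  have hcube : ∀ s ∈ Set.Icc (0 : ℝ) L, a s ^ 3 = h s := by
    intro s hs
    rw [ha]
    rw [← Real.rpow_natCast (h s ^ ((1 : ℝ) / 3)) 3, ← Real.rpow_mul (hpos s hs).le]
    norm_num
  have hZpos : 0 < Z := by
    rw [hZ, MeasureTheory.integral_Icc_eq_integral_Ioc,
      ← intervalIntegral.integral_of_le hL.le]
    apply intervalIntegral.intervalIntegral_pos_of_pos_on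
    · apply ContinuousOn.intervalIntegrable
      rwa [Set.uIcc_of_le hL.le]
    · intro x hx
      exact hapos x (Set.mem_Icc_of_Ioo hx)
    · exact hL
  have hI3 : IntegrableOn a (Set.Icc 0 L) := hcont3.integrableOn_compact isCompact_Icc
  have hintA : (∫ s in Set.Icc (0 : ℝ) L, a s) = Z := hZ.symm
  refine ⟨?_, ?_, ?_, ?_⟩
  · intro s hs
    rw [hlamStar s]
    exact div_pos (hapos s hs) hZpos
  · simp only [hlamStar]
    rw [integral_div, hintA, div_self hZpos.ne']
  · have e1 : (∫ s in Set.Icc (0 : ℝ) L, h s / lamStar s ^ 2)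
        = ∫ s in Set.Icc (0 : ℝ) L, Z ^ 2 * a s := by
      apply setIntegral_congr_fun measurableSet_Icc
      intro s hs
      have h1 := hpos s hs
      have h2 := hapos s hs
      have h3 := hcube s hs
      simp only
      rw [hlamStar s, show h s ^ ((1 : ℝ) / 3) = a s from rfl, div_pow]
      field_simp
      linear_combination (-1 : ℝ) * h3
    rw [e1, MeasureTheory.integral_const_mul, hintA]
    ring
  · intro lam hmeas hlampos hnorm hval
    have hZ3 : (0 : ℝ) < Z ^ 3 := by positivity
    have hI1 : IntegrableOn (fun s => h s / lam s ^ 2) (Set.Icc 0 L) := by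
      by_contra hcon
      rw [integral_undef hcon] at hval
      exact hZ3.ne' hval.symm
    have hI2 : IntegrableOn lam (Set.Icc 0 L) := by
      by_contra hcon
      rw [integral_undef hcon] at hnorm
      exact one_ne_zero hnorm.symm
    set g : ℝ → ℝ := fun s => h s / lam s ^ 2 + 2 * Z ^ 3 * lam s - 3 * Z ^ 2 * a s
      with hg
    have hIg : IntegrableOn g (Set.Icc 0 L) :=
      (hI1.add (hI2.const_mul _)).sub (hI3.const_mul _)
    have h12 : IntegrableOn (fun s => h s / lam s ^ 2 + 2 * Z ^ 3 * lam s)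
        (Set.Icc 0 L) := hI1.add (hI2.const_mul _)
    have h3' : IntegrableOn (fun s => 3 * Z ^ 2 * a s) (Set.Icc 0 L) :=
      hI3.const_mul _
    have hgint : (∫ s in Set.Icc (0 : ℝ) L, g s) = 0 := by
      rw [hg]
      simp only
      rw [MeasureTheory.integral_sub h12 h3',
        MeasureTheory.integral_add hI1 (hI2.const_mul _),
        MeasureTheory.integral_const_mul, MeasureTheory.integral_const_mul,
        hval, hnorm, hintA]
      ring
    have hmem : ∀ᵐ s ∂(volume.restrict (Set.Icc (0 : ℝ) L)), s ∈ Set.Icc (0 : ℝ) L :=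
      ae_restrict_mem measurableSet_Icc
    have hgid : ∀ s, s ∈ Set.Icc (0 : ℝ) L → 0 < lam s →
        g s = (a s - Z * lam s) ^ 2 * (a s + 2 * Z * lam s) / lam s ^ 2 := by
      intro s hs hls
      rw [hg]
      simp only
      rw [← hcube s hs]
      exact cubic_id (a s) (lam s) Z hls.ne'
    have hg0 : ∀ᵐ s ∂(volume.restrict (Set.Icc (0 : ℝ) L)), 0 ≤ g s := by
      filter_upwards [hmem, hlampos] with s hs hls
      rw [hgid s hs hls]
      have h2 := hapos s hs
      positivity
    have hgz : ∀ᵐ s ∂(volume.restrict (Set.Icc (0 : ℝ) L)), g s = 0 := by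
      have := (integral_eq_zero_iff_of_nonneg_ae hg0 hIg).mp hgint
      filter_upwards [this] with s hs
      exact hs
    filter_upwards [hmem, hlampos, hgz] with s hs hls hzs
    have h2 := hapos s hs
    rw [hgid s hs hls] at hzs
    have hfac : (a s - Z * lam s) ^ 2 * (a s + 2 * Z * lam s) = 0 := by
      field_simp at hzs
      linear_combination hzs
    have hsum : 0 < a s + 2 * Z * lam s := by positivity
    have : a s - Z * lam s = 0 := by
      rcases mul_eq_zero.mp hfac with h' | h'
      · exact pow_eq_zero_iff (by norm_num) |>.mp h'
      · exact absurd h' hsum.ne'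
    rw [hlamStar s]
    field_simp
    linarith
end

section
/- Let L > 0 and n ≥ 1. Then the infimum, over all finite sets Q ⊂ ℝ with card Q ≤ n, of (1/L) ∫_0^L (min_{q ∈ Q} (x − q)²) dx equals L²/(12 n²). -/
open MeasureTheory intervalIntegral
open scoped ENNReal

lemma ugp_ciInf_eq_inf' (Q : Finset ℝ) (h : Q.Nonempty) (g : ℝ → ℝ) :
    (⨅ q : Q, g q) = Q.inf' h g := by
  rw [Finset.inf'_eq_csInf_image, iInf]
  congr 1
  rw [Set.image_eq_range]
  rfl

lemma ugp_cont (Q : Finset ℝ) (h : Q.Nonempty) :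
    Continuous (fun x => Q.inf' h (fun q => (x - q) ^ 2)) :=
  Continuous.finset_inf'_apply h (fun _ _ => by fun_prop)

lemma ugp_nonneg (Q : Finset ℝ) (h : Q.Nonempty) (x : ℝ) :
    0 ≤ Q.inf' h (fun q => (x - q) ^ 2) :=
  Finset.le_inf' h _ fun q _ => sq_nonneg _

-- measure bound: for t > 0,
lemma ugp_meas_bound (L : ℝ) (hL : 0 < L) (Q : Finset ℝ) (h : Q.Nonempty) (n : ℕ)
    (hcard : Q.card ≤ n) {t : ℝ} (ht : 0 < t) :
    L - 2 * n * Real.sqrt t ≤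
      (volume.restrict (Set.Ioc 0 L) {a : ℝ | t < Q.inf' h (fun q => (a - q) ^ 2)}).toReal := by
  set f : ℝ → ℝ := fun a => Q.inf' h (fun q => (a - q) ^ 2) with hf
  have hmeas : MeasurableSet {a : ℝ | t < f a} :=
    measurableSet_lt measurable_const (ugp_cont Q h).measurable
  rw [Measure.restrict_apply hmeas]
  -- cover of complement
  have hsub : Set.Ioc (0:ℝ) L \ {a | t < f a} ⊆ ⋃ q ∈ Q, Set.Icc (q - Real.sqrt t) (q + Real.sqrt t) := by
    intro a ha
    have hle : f a ≤ t := not_lt.1 ha.2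
    obtain ⟨q, hq, hfq⟩ := Finset.exists_mem_eq_inf' h (fun q => (a - q) ^ 2)
    have h1 : (a - q) ^ 2 ≤ t := by rw [← hfq]; exact hle
    have h2 : |a - q| ≤ Real.sqrt t := by
      rw [← Real.sqrt_sq_eq_abs]
      exact Real.sqrt_le_sqrt h1
    rw [abs_le] at h2
    exact Set.mem_biUnion hq ⟨by linarith [h2.1], by linarith [h2.2]⟩
  have hcover : volume (⋃ q ∈ Q, Set.Icc (q - Real.sqrt t) (q + Real.sqrt t))
      ≤ (n : ℝ≥0∞) * ENNReal.ofReal (2 * Real.sqrt t) := by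
    refine le_trans (measure_biUnion_finset_le Q _) ?_
    have : ∀ q ∈ Q, volume (Set.Icc (q - Real.sqrt t) (q + Real.sqrt t))
        = ENNReal.ofReal (2 * Real.sqrt t) := by
      intro q _
      rw [Real.volume_Icc]
      ring_nf
    rw [Finset.sum_congr rfl this, Finset.sum_const, nsmul_eq_mul]
    exact mul_le_mul_left (by exact_mod_cast hcard) _
  -- total measure
  have hIoc : volume (Set.Ioc (0:ℝ) L) = ENNReal.ofReal L := by
    rw [Real.volume_Ioc, sub_zero]
  have hsplit : ENNReal.ofReal L ≤ volume ({a : ℝ | t < f a} ∩ Set.Ioc 0 L)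
      + (n : ℝ≥0∞) * ENNReal.ofReal (2 * Real.sqrt t) := by
    calc ENNReal.ofReal L = volume (Set.Ioc (0:ℝ) L) := hIoc.symm
    _ ≤ volume (({a : ℝ | t < f a} ∩ Set.Ioc 0 L) ∪ ⋃ q ∈ Q, Set.Icc (q - Real.sqrt t) (q + Real.sqrt t)) := by
        apply measure_mono
        intro a ha
        by_cases hta : t < f a
        · exact Or.inl ⟨hta, ha⟩
        · exact Or.inr (hsub ⟨ha, hta⟩)
    _ ≤ _ := le_trans (measure_union_le _ _) (add_le_add le_rfl hcover)
  have hfin : volume ({a : ℝ | t < f a} ∩ Set.Ioc 0 L) ≠ ⊤ := by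
    refine ne_top_of_le_ne_top ?_ (measure_mono Set.inter_subset_right)
    simp [hIoc]
  rw [← ENNReal.ofReal_le_iff_le_toReal hfin]
  have h2nt : (0:ℝ) ≤ 2 * n * Real.sqrt t := by positivity
  rw [show L - 2 * n * Real.sqrt t = L - 2 * n * Real.sqrt t from rfl]
  calc ENNReal.ofReal (L - 2 * n * Real.sqrt t)
      ≤ ENNReal.ofReal L - ENNReal.ofReal (2 * n * Real.sqrt t) := by
        rw [ENNReal.ofReal_sub _ h2nt]
    _ ≤ volume ({a : ℝ | t < f a} ∩ Set.Ioc 0 L) := by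
        rw [tsub_le_iff_right]
        refine le_trans hsplit ?_
        gcongr
        rw [show (2:ℝ) * n * Real.sqrt t = n * (2 * Real.sqrt t) by ring,
          ENNReal.ofReal_mul (n.cast_nonneg : (0:ℝ) ≤ (n:ℝ)), ENNReal.ofReal_natCast]

lemma ugp_lower (L : ℝ) (hL : 0 < L) (Q : Finset ℝ) (h : Q.Nonempty) (n : ℕ) (hn : 1 ≤ n)
    (hcard : Q.card ≤ n) :
    L ^ 3 / (12 * (n : ℝ) ^ 2) ≤ ∫ x in (0:ℝ)..L, Q.inf' h (fun q => (x - q) ^ 2) := by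
  have hn0 : (0:ℝ) < n := by exact_mod_cast hn
  set f : ℝ → ℝ := fun a => Q.inf' h (fun q => (a - q) ^ 2) with hf
  set μ := volume.restrict (Set.Ioc (0:ℝ) L) with hμ
  set g : ℝ → ℝ := fun t => (μ {a | t < f a}).toReal with hg
  have hfc : Continuous f := ugp_cont Q h
  have hfi : IntegrableOn f (Set.Ioc 0 L) := hfc.integrableOn_Ioc
  have hμuniv : μ Set.univ ≠ ⊤ := by
    rw [hμ, Measure.restrict_apply_univ, Real.volume_Ioc]
    exact ENNReal.ofReal_ne_top
  have hgfin : ∀ t, μ {a | t < f a} ≠ ⊤ := fun t =>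
    ne_top_of_le_ne_top hμuniv (measure_mono (Set.subset_univ _))
  have hganti : Antitone g := by
    intro s t hst
    exact ENNReal.toReal_mono (hgfin s) (measure_mono fun a ha => lt_of_le_of_lt hst ha)
  have hgbd : ∀ t, g t ≤ L := by
    intro t
    have : μ {a | t < f a} ≤ ENNReal.ofReal L := by
      rw [hμ, Measure.restrict_apply (measurableSet_lt measurable_const hfc.measurable)]
      refine le_trans (measure_mono Set.inter_subset_right) ?_
      rw [Real.volume_Ioc, sub_zero]
    calc g t ≤ (ENNReal.ofReal L).toReal := ENNReal.toReal_mono ENNReal.ofReal_ne_top this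
    _ = L := ENNReal.toReal_ofReal hL.le
  -- choose q0, and vanishing beyond M
  obtain ⟨q0, hq0⟩ := id h
  set M : ℝ := (L + |q0|) ^ 2 with hM
  have hM0 : 0 < M := by positivity
  have hgzero : ∀ t, M ≤ t → g t = 0 := by
    intro t hMt
    have : μ {a | t < f a} = 0 := by
      rw [hμ, Measure.restrict_apply (measurableSet_lt measurable_const hfc.measurable)]
      convert measure_empty (μ := (volume : Measure ℝ))
      rw [Set.eq_empty_iff_forall_notMem]
      rintro a ⟨hta, ha1, ha2⟩
      have h1 : f a ≤ (a - q0) ^ 2 := Finset.inf'_le _ hq0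
      have h2 : (a - q0) ^ 2 ≤ M := by
        rw [hM]
        have := abs_nonneg q0
        nlinarith [neg_abs_le q0, le_abs_self q0]
      exact absurd (lt_of_le_of_lt (h1.trans h2) (lt_of_le_of_lt hMt hta)) (lt_irrefl _)
    simp [hg, this]
  -- integrability of g on Ioi 0
  have hgmeas : Measurable g := hganti.measurable
  have hgint : IntegrableOn g (Set.Ioi 0) := by
    rw [← Set.Ioc_union_Ioi_eq_Ioi hM0.le]
    refine IntegrableOn.union ?_ ?_
    · refine Measure.integrableOn_of_bounded (M := L) ?_ hgmeas.aestronglyMeasurable ?_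
      · rw [Real.volume_Ioc]; exact ENNReal.ofReal_ne_top
      · exact Filter.Eventually.of_forall fun t => by
          rw [Real.norm_eq_abs, abs_of_nonneg ENNReal.toReal_nonneg]
          exact hgbd t
    · exact (integrableOn_congr_fun (fun t ht => hgzero t (le_of_lt ht)) measurableSet_Ioi).2
        (integrableOn_zero)
  -- layer cake
  have hlc : ∫ x in (0:ℝ)..L, f x = ∫ t in Set.Ioi (0:ℝ), g t := by
    rw [intervalIntegral.integral_of_le hL.le]
    exact Integrable.integral_eq_integral_meas_lt hfi
      (Filter.Eventually.of_forall (ugp_nonneg Q h))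
  set T : ℝ := (L / (2 * n)) ^ 2 with hT
  have hT0 : 0 < T := by positivity
  have step1 : ∫ t in Set.Ioc (0:ℝ) T, g t ≤ ∫ t in Set.Ioi (0:ℝ), g t := by
    refine setIntegral_mono_set hgint ?_ ?_
    · exact Filter.Eventually.of_forall fun t => ENNReal.toReal_nonneg
    · exact HasSubset.Subset.eventuallyLE Set.Ioc_subset_Ioi_self
  have hmin_int : IntegrableOn (fun t => L - 2 * n * Real.sqrt t) (Set.Ioc 0 T) := by
    apply Continuous.integrableOn_Ioc
    fun_prop
  have step2 : ∫ t in Set.Ioc (0:ℝ) T, (L - 2 * n * Real.sqrt t) ≤ ∫ t in Set.Ioc (0:ℝ) T, g t := by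
    refine setIntegral_mono_on hmin_int ?_ measurableSet_Ioc ?_
    · refine Measure.integrableOn_of_bounded (M := L) ?_ hgmeas.aestronglyMeasurable ?_
      · rw [Real.volume_Ioc]; exact ENNReal.ofReal_ne_top
      · exact Filter.Eventually.of_forall fun t => by
          rw [Real.norm_eq_abs, abs_of_nonneg ENNReal.toReal_nonneg]
          exact hgbd t
    · intro t ht
      exact ugp_meas_bound L hL Q h n hcard ht.1
  have step3 : ∫ t in Set.Ioc (0:ℝ) T, (L - 2 * n * Real.sqrt t) = L ^ 3 / (12 * (n:ℝ) ^ 2) := by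
    rw [← intervalIntegral.integral_of_le hT0.le]
    have hsqrt_int : IntervalIntegrable Real.sqrt volume 0 T :=
      Real.continuous_sqrt.intervalIntegrable 0 T
    rw [intervalIntegral.integral_sub intervalIntegrable_const
      ((hsqrt_int.const_mul _))]
    rw [intervalIntegral.integral_const, intervalIntegral.integral_const_mul]
    have hsq : ∫ t in (0:ℝ)..T, Real.sqrt t = (T ^ ((3:ℝ)/2)) / ((3:ℝ)/2) := by
      have : ∀ t ∈ Set.uIcc (0:ℝ) T, Real.sqrt t = t ^ ((1:ℝ)/2) := fun t _ =>
        Real.sqrt_eq_rpow t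
      rw [intervalIntegral.integral_congr this, integral_rpow (Or.inl (by norm_num))]
      norm_num
    rw [hsq]
    have hTrw : T ^ ((3:ℝ)/2) = (L / (2 * n)) ^ 3 := by
      rw [hT, ← Real.rpow_natCast (L / (2*n)) 2, ← Real.rpow_mul (by positivity)]
      norm_num
    rw [hTrw, hT]
    field_simp
    ring_nf
    have hn2 : (n:ℝ)^2 * ((n:ℝ)⁻¹)^2 = 1 := by rw [← mul_pow, mul_inv_cancel₀ hn0.ne', one_pow]
    linear_combination (18 * L^3) * hn2
  calc L ^ 3 / (12 * (n:ℝ) ^ 2) = ∫ t in Set.Ioc (0:ℝ) T, (L - 2 * n * Real.sqrt t) := step3.symm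
    _ ≤ ∫ t in Set.Ioc (0:ℝ) T, g t := step2
    _ ≤ ∫ t in Set.Ioi (0:ℝ), g t := step1
    _ = ∫ x in (0:ℝ)..L, f x := hlc.symm

lemma ugp_point (d : ℝ) (hd : 0 < d) (i j : ℕ) (x : ℝ)
    (h1 : 2*(i:ℝ)*d ≤ x) (h2 : x ≤ (2*(i:ℝ)+2)*d) :
    (x - (2*(i:ℝ)+1)*d)^2 ≤ (x - (2*(j:ℝ)+1)*d)^2 := by
  rcases lt_trichotomy j i with hji | rfl | hij
  · have hij1 : (j:ℝ) + 1 ≤ i := by exact_mod_cast hji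
    have ha : (0:ℝ) ≤ ((i:ℝ)-j)*d := by nlinarith
    have hb : (0:ℝ) ≤ x - ((i:ℝ)+(j:ℝ)+1)*d := by nlinarith
    nlinarith [mul_nonneg ha hb]
  · exact le_refl _
  · have hij1 : (i:ℝ) + 1 ≤ j := by exact_mod_cast hij
    have ha : (0:ℝ) ≤ ((j:ℝ)-i)*d := by nlinarith
    have hb : (0:ℝ) ≤ ((i:ℝ)+(j:ℝ)+1)*d - x := by nlinarith
    nlinarith [mul_nonneg ha hb]

lemma ugp_upper (L : ℝ) (hL : 0 < L) (n : ℕ) (hn : 1 ≤ n) :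
    ∃ (Q : Finset ℝ) (hQ : Q.Nonempty), Q.card ≤ n ∧
      ∫ x in (0:ℝ)..L, Q.inf' hQ (fun q => (x - q) ^ 2) = L ^ 3 / (12 * (n:ℝ) ^ 2) := by
  have hn0 : (0:ℝ) < n := by exact_mod_cast hn
  set d : ℝ := L / (2*n) with hd
  have hd0 : 0 < d := by positivity
  set c : ℕ → ℝ := fun i => (2*(i:ℝ)+1)*d with hc
  set Q := (Finset.range n).image c with hQdef
  have hne : Q.Nonempty := ⟨c 0, Finset.mem_image_of_mem c (Finset.mem_range.2 hn)⟩
  refine ⟨Q, hne, le_trans Finset.card_image_le (by simp), ?_⟩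
  set a : ℕ → ℝ := fun i => 2*(i:ℝ)*d with ha
  have hcont : Continuous (fun x => Q.inf' hne (fun q => (x - q) ^ 2)) := ugp_cont Q hne
  have hsum : ∑ i ∈ Finset.range n, ∫ x in a i..a (i+1), Q.inf' hne (fun q => (x - q)^2)
      = ∫ x in (a 0)..(a n), Q.inf' hne (fun q => (x - q)^2) := by
    apply intervalIntegral.sum_integral_adjacent_intervals
    intro k _
    exact hcont.intervalIntegrable _ _
  have hpiece : ∀ i ∈ Finset.range n, ∫ x in a i..a (i+1), Q.inf' hne (fun q => (x - q)^2)
      = 2 * d^3 / 3 := by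
    intro i hi
    have hilt : i < n := Finset.mem_range.1 hi
    have hle : a i ≤ a (i+1) := by
      rw [ha]; push_cast; nlinarith
    have heq : Set.EqOn (fun x => Q.inf' hne (fun q => (x - q)^2)) (fun x => (x - c i)^2)
        (Set.uIcc (a i) (a (i+1))) := by
      intro x hx
      rw [Set.uIcc_of_le hle] at hx
      have hx1 : 2*(i:ℝ)*d ≤ x := hx.1
      have hx2 : x ≤ (2*(i:ℝ)+2)*d := by
        have := hx.2
        rw [ha] at this
        push_cast at this
        linarith
      apply le_antisymm
      · exact Finset.inf'_le _ (Finset.mem_image_of_mem c (Finset.mem_range.2 hilt))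
      · refine Finset.le_inf' _ _ ?_
        intro q hq
        obtain ⟨j, _, rfl⟩ := Finset.mem_image.1 hq
        exact ugp_point d hd0 i j x hx1 hx2
    rw [intervalIntegral.integral_congr heq]
    have := intervalIntegral.integral_comp_sub_right (a := a i) (b := a (i+1))
      (fun y => y^2) (c i)
    rw [this]
    have e1 : a i - c i = -d := by rw [ha, hc]; push_cast; ring
    have e2 : a (i+1) - c i = d := by rw [ha, hc]; push_cast; ring
    rw [e1, e2, integral_pow]
    norm_num
    ring
  rw [Finset.sum_congr rfl hpiece, Finset.sum_const, Finset.card_range, nsmul_eq_mul] at hsum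
  have e0 : a 0 = 0 := by rw [ha]; push_cast; ring
  have eno : a n = L := by rw [ha, hd]; field_simp
  rw [e0, eno] at hsum
  rw [← hsum, hd]
  field_simp
  ring

lemma ugp_integral_congr (L : ℝ) (Q : Finset ℝ) (hQ : Q.Nonempty) :
    (∫ x in (0:ℝ)..L, ⨅ q : Q, (x - (q : ℝ)) ^ 2)
      = ∫ x in (0:ℝ)..L, Q.inf' hQ (fun q => (x - q) ^ 2) := by
  apply intervalIntegral.integral_congr
  intro x _
  exact ugp_ciInf_eq_inf' Q hQ (fun y => (x - y) ^ 2)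

/-- Uniform Geodesic Principle in one dimension: for the uniform distribution on
`[0,L]` and squared-distance distortion, the `n`-th quantization error is
`inf_{|Q| ≤ n} (1/L) ∫_0^L min_{q∈Q} (x−q)² dx = L²/(12 n²)`. -/
theorem stmt7 (L : ℝ) (hL : 0 < L) (n : ℕ) (hn : 1 ≤ n) :
    sInf {v : ℝ | ∃ Q : Finset ℝ, Q.Nonempty ∧ Q.card ≤ n ∧
        v = (1 / L) * ∫ x in (0 : ℝ)..L, ⨅ q : Q, (x - (q : ℝ)) ^ 2}
      = L ^ 2 / (12 * (n : ℝ) ^ 2) := by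
  have hn0 : (0:ℝ) < n := by exact_mod_cast hn
  have harith : (1 / L) * (L ^ 3 / (12 * (n:ℝ) ^ 2)) = L ^ 2 / (12 * (n:ℝ) ^ 2) := by
    field_simp
  apply IsLeast.csInf_eq
  constructor
  · obtain ⟨Q, hQ, hcard, hint⟩ := ugp_upper L hL n hn
    refine ⟨Q, hQ, hcard, ?_⟩
    rw [ugp_integral_congr L Q hQ, hint, harith]
  · rintro v ⟨Q, hQ, hcard, rfl⟩
    rw [ugp_integral_congr L Q hQ, ← harith]
    apply mul_le_mul_of_nonneg_left (ugp_lower L hL Q hQ n hn hcard)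
    positivity
end
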